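/- arXiv:0902.2314 — 2 statements merged into one kernel-verified Lean document; each statement's English description precedes it below -/
import Mathlib

section
/- In A = ℚ[χ₁,...,χ₄], the ideal 𝔞 = (χ₁³, χ₂³, (χ₁²+χ₂²)χ₄ + χ₁χ₂χ₃) satisfies (χ₁χ₂)²·(χ₁,χ₂,χ₃,χ₄) ⊆ 𝔞 but χ₁χ₂ ∉ 𝔞; in particular 𝔞 is a mixed ideal (the maximal ideal (χ₁,χ₂,χ₃,χ₄) is an associated prime of A/𝔞 even though 𝔞 has codimension 3). -/
/-!
Every product of `(χ₁χ₂)²` with a variable is an explicit combination of the three generators.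
On the other hand the generators are homogeneous of degree `3`, so `𝔞` lies in the cube of the
ideal of the variables, which contains no monomial of degree `2` such as `χ₁χ₂`.
-/

open MvPolynomial

section CommRing

variable {R : Type*} [CommRing R]

def macaulayIdeal (x y z w : R) : Ideal R :=
  Ideal.span {x ^ 3, y ^ 3, (x ^ 2 + y ^ 2) * w + x * y * z}

theorem sq_mul_mem_macaulayIdeal {x y z w f : R} (hf : f ∈ Ideal.span {x, y, z, w}) :
    (x * y) ^ 2 * f ∈ macaulayIdeal x y z w := by
  have hx : x ^ 3 ∈ macaulayIdeal x y z w := Ideal.subset_span (by simp)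
  have hy : y ^ 3 ∈ macaulayIdeal x y z w := Ideal.subset_span (by simp)
  have hg : (x ^ 2 + y ^ 2) * w + x * y * z ∈ macaulayIdeal x y z w :=
    Ideal.subset_span (by simp)
  rw [mul_comm, ← smul_eq_mul, ← Submodule.mem_colon_singleton]
  refine (Ideal.span_le.mpr ?_) hf
  simp only [Set.insert_subset_iff, Set.singleton_subset_iff, SetLike.mem_coe,
    Submodule.mem_colon_singleton, smul_eq_mul]
  refine ⟨?_, ?_, ?_, ?_⟩
  · rw [show x * (x * y) ^ 2 = y ^ 2 * x ^ 3 by ring]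
    exact Ideal.mul_mem_left _ _ hx
  · rw [show y * (x * y) ^ 2 = x ^ 2 * y ^ 3 by ring]
    exact Ideal.mul_mem_left _ _ hy
  · rw [show z * (x * y) ^ 2 =
        x * y * ((x ^ 2 + y ^ 2) * w + x * y * z) - y * w * x ^ 3 - x * w * y ^ 3 by ring]
    exact sub_mem (sub_mem (Ideal.mul_mem_left _ _ hg) (Ideal.mul_mem_left _ _ hx))
      (Ideal.mul_mem_left _ _ hy)
  · rw [show w * (x * y) ^ 2 =
        x ^ 2 * ((x ^ 2 + y ^ 2) * w + x * y * z) - (x * w + y * z) * x ^ 3 by ring]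
    exact sub_mem (Ideal.mul_mem_left _ _ hg) (Ideal.mul_mem_left _ _ hx)

end CommRing

namespace MvPolynomial

variable {σ R : Type*} [CommRing R]

theorem IsHomogeneous.mem_pow_idealOfVars {φ : MvPolynomial σ R} {n : ℕ}
    (hφ : φ.IsHomogeneous n) : φ ∈ idealOfVars σ R ^ n := by
  rw [mem_pow_idealOfVars_iff]
  intro d hd
  rw [Finsupp.degree_eq_weight_one]
  exact (hφ (mem_support_iff.mp hd)).ge

theorem macaulayIdeal_X_le_pow_idealOfVars (i j k l : σ) :
    macaulayIdeal (X i) (X j) (X k) (X l) ≤ idealOfVars σ R ^ 3 := by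
  refine Ideal.span_le.mpr ?_
  rintro p (rfl | rfl | rfl) <;> apply IsHomogeneous.mem_pow_idealOfVars
  · exact isHomogeneous_X_pow _ _
  · exact isHomogeneous_X_pow _ _
  · exact (((isHomogeneous_X_pow _ _).add (isHomogeneous_X_pow _ _)).mul
      (isHomogeneous_X _ _)).add (((isHomogeneous_X _ _).mul (isHomogeneous_X _ _)).mul
      (isHomogeneous_X _ _))

theorem X_mul_X_notMem_macaulayIdeal [Nontrivial R] (i j k l : σ) :
    X i * X j ∉ macaulayIdeal (X i) (X j) (X k) (X l : MvPolynomial σ R) := by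
  intro h
  have h3 := macaulayIdeal_X_le_pow_idealOfVars i j k l h
  rw [X, X, monomial_mul, one_mul, monomial_mem_pow_idealOfVars_iff _ _ one_ne_zero,
    map_add, Finsupp.degree_single, Finsupp.degree_single] at h3
  omega

end MvPolynomial

/-- Macaulay's mixed ideal: in `ℚ[χ₁,…,χ₄]`, for
`𝔞 = (χ₁³, χ₂³, (χ₁²+χ₂²)χ₄ + χ₁χ₂χ₃)` one has
`(χ₁χ₂)²·(χ₁,χ₂,χ₃,χ₄) ⊆ 𝔞` but `χ₁χ₂ ∉ 𝔞`. -/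
theorem stmt5 :
    let A := MvPolynomial (Fin 4) ℚ
    let c : Fin 4 → A := fun i => X i
    let a : Ideal A :=
      Ideal.span {c 0 ^ 3, c 1 ^ 3, (c 0 ^ 2 + c 1 ^ 2) * c 3 + c 0 * c 1 * c 2}
    (∀ f ∈ Ideal.span ({c 0, c 1, c 2, c 3} : Set A), (c 0 * c 1) ^ 2 * f ∈ a) ∧
    c 0 * c 1 ∉ a :=
  ⟨fun _ hf => sq_mul_mem_macaulayIdeal hf, X_mul_X_notMem_macaulayIdeal 0 1 2 3⟩
end

section
/- Let k be a field and D = k[d₁,d₂,d₃]. Let M = D/𝔞 with 𝔞 = (d₃², d₂d₃ − d₁², d₂²). Then 𝔞 is primary for 𝔪 = (d₁,d₂,d₃), M has k-dimension 8 with basis the residues of 1, d₁, d₂, d₃, d₁², d₁d₂, d₁d₃, d₁³, and the socle {m ∈ M | 𝔪m = 0} is one-dimensional, spanned by the residue of d₁³. -/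
/-!
The quotient is spanned by the eight monomials because their span contains `1` and, modulo
`d₃² = d₂² = 0` and `d₂d₃ = d₁²`, is stable under multiplication by `d₁, d₂, d₃`.
Independence and the socle come from the Macaulay dual generator `F = d₁^[3] + d₁d₂d₃`:
the functional `ℓ f = coeff_{d₁³} f + coeff_{d₁d₂d₃} f` kills `𝔞`, and under the pairing
`(f, g) ↦ ℓ (f g)` the eight monomials are dual to `d₁³, d₁², d₁d₃, d₁d₂, d₁, d₃, d₂, 1`.
Hence the coordinates of a class `x` are the numbers `ℓ (x wⱼ)`; for `x` in the socle they all
vanish except the last one, because every other `wⱼ` lies in `𝔪`. Finally `𝔞 ⊆ 𝔪` and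
`d₁⁴, d₂², d₃² ∈ 𝔞`, so `rad 𝔞 = 𝔪` is maximal and `𝔞` is primary.
-/

open MvPolynomial

section Pairing

variable {k A ι : Type*} [CommSemiring k] [Semiring A] [Algebra k A] [DecidableEq ι]
  (ℓ : A →ₗ[k] k) {v w : ι → A}

theorem LinearIndependent.of_pairing (h : ∀ i j, ℓ (v i * w j) = if i = j then 1 else 0) :
    LinearIndependent k v := by
  refine .of_comp (LinearMap.pi fun j => ℓ ∘ₗ LinearMap.mulRight k (w j)) ?_
  have hδ : (LinearMap.pi fun j => ℓ ∘ₗ LinearMap.mulRight k (w j)) ∘ v =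
      fun i => Pi.single i 1 := by
    ext i j
    simp [h, Pi.single_apply, eq_comm]
  rw [hδ]
  exact Pi.linearIndependent_single_one ι k

theorem eq_sum_smul_of_pairing [Fintype ι] (h : ∀ i j, ℓ (v i * w j) = if i = j then 1 else 0)
    (hv : Submodule.span k (Set.range v) = ⊤) (a : A) : a = ∑ j, ℓ (a * w j) • v j := by
  obtain ⟨c, rfl⟩ := (Submodule.mem_span_range_iff_exists_fun k).1 (hv ▸ Submodule.mem_top (x := a))
  simp [Finset.sum_mul, h]

end Pairing

theorem Submodule.mul_mem_span_range {k A ι : Type*} [CommSemiring k] [Semiring A] [Algebra k A]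
    {v : ι → A} {g : A} (h : ∀ i, v i * g ∈ span k (Set.range v)) {a : A}
    (ha : a ∈ span k (Set.range v)) : a * g ∈ span k (Set.range v) :=
  (span_le (p := (span k (Set.range v)).comap (LinearMap.mulRight k g))).2
    (Set.range_subset_iff.2 h) ha

theorem Ideal.Quotient.smul_eq_mk_mul {R : Type*} [CommRing R] (I : Ideal R) (c : R) (x : R ⧸ I) :
    c • x = Ideal.Quotient.mk I c * x := by
  obtain ⟨p, rfl⟩ := Ideal.Quotient.mk_surjective x
  rfl

namespace MvPolynomial

variable {σ R : Type*}

theorem eq_top_of_one_mem_of_mul_X_mem {A : Type*} [CommSemiring R] [Semiring A] [Algebra R A]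
    (f : MvPolynomial σ R →ₐ[R] A) (hf : Function.Surjective f) {W : Submodule R A}
    (h1 : 1 ∈ W) (hX : ∀ w ∈ W, ∀ i, w * f (X i) ∈ W) : W = ⊤ := by
  rw [eq_top_iff]
  rintro a -
  obtain ⟨p, rfl⟩ := hf a
  induction p using MvPolynomial.induction_on with
  | C r => simpa [Algebra.algebraMap_eq_smul_one] using W.smul_mem r h1
  | add p q hp hq => rw [map_add]; exact W.add_mem hp hq
  | mul_X p i hp => rw [map_mul]; exact hX _ hp i

theorem idealOfVars_eq_ker_constantCoeff [CommSemiring R] :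
    idealOfVars σ R = RingHom.ker constantCoeff := by
  ext p
  rw [← pow_one (idealOfVars σ R), mem_pow_idealOfVars_iff', RingHom.mem_ker]
  simp [Finsupp.degree_eq_zero_iff, constantCoeff_eq]

theorem isMaximal_idealOfVars [Field R] : (idealOfVars σ R).IsMaximal := by
  rw [idealOfVars_eq_ker_constantCoeff]
  exact RingHom.ker_isMaximal_of_surjective _ fun r => ⟨C r, constantCoeff_C σ r⟩

theorem idealOfVars_fin_three [CommSemiring R] :
    idealOfVars (Fin 3) R = Ideal.span {X 0, X 1, X 2} := by
  rw [idealOfVars]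
  congr 1
  ext p
  simp [Fin.exists_fin_succ, eq_comm]

end MvPolynomial

section Monomials

def mono3 {M : Type*} [Monoid M] (x y z : M) (e : ℕ × ℕ × ℕ) : M :=
  x ^ e.1 * y ^ e.2.1 * z ^ e.2.2

theorem mono3_add {M : Type*} [CommMonoid M] (x y z : M) (e e' : ℕ × ℕ × ℕ) :
    mono3 x y z (e + e') = mono3 x y z e * mono3 x y z e' := by
  simp only [mono3, Prod.fst_add, Prod.snd_add, pow_add]
  ac_rfl

theorem map_mono3 {M N F : Type*} [Monoid M] [Monoid N] [FunLike F M N] [MonoidHomClass F M N]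
    (f : F) (x y z : M) (e : ℕ × ℕ × ℕ) : f (mono3 x y z e) = mono3 (f x) (f y) (f z) e := by
  simp [mono3]

noncomputable def exponent3 (e : ℕ × ℕ × ℕ) : Fin 3 →₀ ℕ :=
  Finsupp.single 0 e.1 + Finsupp.single 1 e.2.1 + Finsupp.single 2 e.2.2

theorem exponent3_injective : Function.Injective exponent3 := by
  rintro ⟨a, b, c⟩ ⟨a', b', c'⟩ h
  simpa [exponent3, Finsupp.ext_iff, Fin.forall_fin_succ, Finsupp.single_apply] using h

variable {k : Type*} [CommSemiring k]

theorem mono3_X_eq_monomial (e : ℕ × ℕ × ℕ) :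
    mono3 (X 0) (X 1) (X 2) e = (monomial (exponent3 e) 1 : MvPolynomial (Fin 3) k) := by
  simp [mono3, exponent3, X_pow_eq_monomial, monomial_mul]

theorem monomial_eq_C_mul_mono3 (u : Fin 3 →₀ ℕ) (r : k) :
    monomial u r = C r * mono3 (X 0) (X 1) (X 2) (u 0, u 1, u 2) := by
  rw [monomial_eq, Finsupp.prod_fintype _ _ (by simp), Fin.prod_univ_three, mono3]

end Monomials

namespace GorensteinExample

def stdExponent : Fin 8 → ℕ × ℕ × ℕ :=
  ![(0, 0, 0), (1, 0, 0), (0, 1, 0), (0, 0, 1), (2, 0, 0), (1, 1, 0), (1, 0, 1), (3, 0, 0)]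

def dualExponent : Fin 8 → ℕ × ℕ × ℕ :=
  ![(3, 0, 0), (2, 0, 0), (1, 0, 1), (1, 1, 0), (1, 0, 0), (0, 0, 1), (0, 1, 0), (0, 0, 0)]

theorem mono3_stdExponent_mul_mem_span {k A : Type*} [CommSemiring k] [CommRing A] [Algebra k A]
    {x y z : A} (hz : z ^ 2 = 0) (hyz : y * z = x ^ 2) (hy : y ^ 2 = 0) (i : Fin 8) {g : A}
    (hg : g ∈ ({x, y, z} : Set A)) :
    mono3 x y z (stdExponent i) * g ∈
      Submodule.span k (Set.range fun j => mono3 x y z (stdExponent j)) := by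
  suffices h : mono3 x y z (stdExponent i) * g = 0 ∨
      ∃ j, mono3 x y z (stdExponent j) = mono3 x y z (stdExponent i) * g by
    rcases h with h | h
    · exact h ▸ Submodule.zero_mem _
    · exact Submodule.subset_span h
  rcases hg with rfl | rfl | rfl <;> fin_cases i <;>
    simp [Fin.exists_fin_succ, stdExponent, mono3] <;> grind

section CommRing

variable (k : Type*) [CommRing k]

noncomputable abbrev relIdeal : Ideal (MvPolynomial (Fin 3) k) :=
  Ideal.span {X 2 ^ 2, X 1 * X 2 - X 0 ^ 2, X 1 ^ 2}

/-- Contraction against Macaulay's dual generator `X₀^[3] + X₀X₁X₂`, evaluated at `0`. -/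
noncomputable def dualGenerator : MvPolynomial (Fin 3) k →ₗ[k] k :=
  lcoeff k (exponent3 (3, 0, 0)) + lcoeff k (exponent3 (1, 1, 1))

variable {k}

theorem dualGenerator_mono3 (e : ℕ × ℕ × ℕ) :
    dualGenerator k (mono3 (X 0) (X 1) (X 2) e) =
      (if e = (3, 0, 0) then 1 else 0) + if e = (1, 1, 1) then 1 else 0 := by
  simp only [dualGenerator, mono3_X_eq_monomial, LinearMap.add_apply, lcoeff_apply,
    coeff_monomial, exponent3_injective.eq_iff]

theorem dualGenerator_mono3_mul_eq_zero (e : ℕ × ℕ × ℕ) {f : MvPolynomial (Fin 3) k}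
    (hf : f ∈ ({X 2 ^ 2, X 1 * X 2 - X 0 ^ 2, X 1 ^ 2} : Set _)) :
    dualGenerator k (mono3 (X 0) (X 1) (X 2) e * f) = 0 := by
  obtain ⟨a, b, c⟩ := e
  rcases hf with rfl | rfl | rfl
  · rw [show (X 2 ^ 2 : MvPolynomial (Fin 3) k) = mono3 (X 0) (X 1) (X 2) (0, 0, 2) by
      simp [mono3], ← mono3_add, dualGenerator_mono3]
    simp
  · rw [show (X 1 * X 2 : MvPolynomial (Fin 3) k) = mono3 (X 0) (X 1) (X 2) (0, 1, 1) by
      simp [mono3], show (X 0 ^ 2 : MvPolynomial (Fin 3) k) = mono3 (X 0) (X 1) (X 2) (2, 0, 0) by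
      simp [mono3], mul_sub, ← mono3_add, ← mono3_add, map_sub, dualGenerator_mono3,
      dualGenerator_mono3]
    simp
  · rw [show (X 1 ^ 2 : MvPolynomial (Fin 3) k) = mono3 (X 0) (X 1) (X 2) (0, 2, 0) by
      simp [mono3], ← mono3_add, dualGenerator_mono3]
    simp

theorem dualGenerator_mul_eq_zero {f : MvPolynomial (Fin 3) k} (hf : f ∈ relIdeal k)
    (g : MvPolynomial (Fin 3) k) : dualGenerator k (g * f) = 0 := by
  induction hf using Submodule.span_induction generalizing g with
  | mem f hf =>
    induction g using MvPolynomial.induction_on' with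
    | monomial u r =>
      rw [monomial_eq_C_mul_mono3, mul_assoc, ← smul_eq_C_mul, map_smul,
        dualGenerator_mono3_mul_eq_zero _ hf, smul_zero]
    | add p q hp hq => rw [add_mul, map_add, hp, hq, add_zero]
  | zero => simp
  | add x y _ _ hx hy => rw [mul_add, map_add, hx, hy, add_zero]
  | smul r x _ hx => rw [smul_eq_mul, ← mul_assoc, hx]

theorem dualGenerator_std_mul_dual (i j : Fin 8) :
    dualGenerator k (mono3 (X 0) (X 1) (X 2) (stdExponent i) *
      mono3 (X 0) (X 1) (X 2) (dualExponent j)) = if i = j then 1 else 0 := by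
  rw [← mono3_add, dualGenerator_mono3]
  fin_cases i <;> fin_cases j <;> simp [stdExponent, dualExponent]

theorem mono3_dualExponent_mem_idealOfVars {j : Fin 8} (hj : j ≠ 7) :
    mono3 (X 0) (X 1) (X 2) (dualExponent j) ∈ idealOfVars (Fin 3) k := by
  rw [idealOfVars_eq_ker_constantCoeff, RingHom.mem_ker]
  fin_cases j <;> simp_all [mono3, dualExponent]

local notation "π" => Ideal.Quotient.mk (relIdeal k)

theorem mk_X_relations :
    π (X 2) ^ 2 = 0 ∧ π (X 1) * π (X 2) = π (X 0) ^ 2 ∧ π (X 1) ^ 2 = 0 := by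
  have h : ∀ p ∈ ({X 2 ^ 2, X 1 * X 2 - X 0 ^ 2, X 1 ^ 2} : Set (MvPolynomial (Fin 3) k)),
      π p = 0 := fun p hp => Ideal.Quotient.eq_zero_iff_mem.2 (Ideal.subset_span hp)
  refine ⟨by simpa using h _ (Set.mem_insert _ _), ?_,
    by simpa using h _ (Set.mem_insert_of_mem _ (Set.mem_insert_of_mem _ rfl))⟩
  simpa [sub_eq_zero] using h _ (Set.mem_insert_of_mem _ (Set.mem_insert _ _))

theorem span_mono3_stdExponent_eq_top :
    Submodule.span k (Set.range fun i => mono3 (π (X 0)) (π (X 1)) (π (X 2)) (stdExponent i)) =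
      ⊤ := by
  obtain ⟨hz, hyz, hy⟩ := mk_X_relations (k := k)
  refine eq_top_of_one_mem_of_mul_X_mem (Ideal.Quotient.mkₐ k (relIdeal k))
    (Ideal.Quotient.mkₐ_surjective k _) (Submodule.subset_span ⟨0, by simp [stdExponent, mono3]⟩)
    fun w hw n => Submodule.mul_mem_span_range
      (fun i => mono3_stdExponent_mul_mem_span hz hyz hy i ?_) hw
  fin_cases n <;> simp

noncomputable def quotDualGenerator : (MvPolynomial (Fin 3) k ⧸ relIdeal k) →ₗ[k] k :=
  ((relIdeal k).restrictScalars k).liftQ (dualGenerator k)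
      (fun f hf => by simpa using dualGenerator_mul_eq_zero hf 1) ∘ₗ
    (Submodule.Quotient.restrictScalarsEquiv k (relIdeal k)).symm.toLinearMap

theorem quotDualGenerator_mk (p : MvPolynomial (Fin 3) k) :
    quotDualGenerator (π p) = dualGenerator k p :=
  rfl

theorem quotDualGenerator_std_mul_dual (i j : Fin 8) :
    quotDualGenerator (mono3 (π (X 0)) (π (X 1)) (π (X 2)) (stdExponent i) *
      mono3 (π (X 0)) (π (X 1)) (π (X 2)) (dualExponent j)) = if i = j then 1 else 0 := by
  rw [← map_mono3, ← map_mono3, ← map_mul, quotDualGenerator_mk, dualGenerator_std_mul_dual]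

theorem socle_eq_span_X_zero_pow_three :
    {x : MvPolynomial (Fin 3) k ⧸ relIdeal k | ∀ c ∈ idealOfVars (Fin 3) k, c • x = 0} =
      Submodule.span k {π (X 0 ^ 3)} := by
  ext x
  constructor
  · intro hx
    have hdual : ∀ j ≠ 7, x * mono3 (π (X 0)) (π (X 1)) (π (X 2)) (dualExponent j) = 0 := by
      intro j hj
      rw [← map_mono3, mul_comm, ← Ideal.Quotient.smul_eq_mk_mul]
      exact hx _ (mono3_dualExponent_mem_idealOfVars hj)
    rw [eq_sum_smul_of_pairing quotDualGenerator quotDualGenerator_std_mul_dual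
        span_mono3_stdExponent_eq_top x,
      Finset.sum_eq_single 7 (fun j _ hj => by rw [hdual j hj, map_zero, zero_smul]) (by simp)]
    exact Submodule.smul_mem _ _ (Submodule.subset_span (by simp [mono3, stdExponent]))
  · intro hx c hc
    obtain ⟨hz, hyz, hy⟩ := mk_X_relations (k := k)
    have hann : idealOfVars (Fin 3) k ≤
        (Submodule.span (MvPolynomial (Fin 3) k) {π (X 0 ^ 3)}).annihilator := by
      refine Ideal.span_le.2 (Set.range_subset_iff.2 fun i => ?_)
      rw [SetLike.mem_coe, Submodule.mem_annihilator_span_singleton,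
        Ideal.Quotient.smul_eq_mk_mul, map_pow]
      fin_cases i <;> simp <;> grind
    obtain ⟨t, rfl⟩ := Submodule.mem_span_singleton.1 hx
    rw [smul_comm, (Submodule.mem_annihilator_span_singleton _ _).1 (hann hc), smul_zero]

end CommRing

section Field

variable {k : Type*} [Field k]

local notation "π" => Ideal.Quotient.mk (relIdeal k)

theorem relIdeal_le_idealOfVars : relIdeal k ≤ idealOfVars (Fin 3) k := by
  rw [idealOfVars_eq_ker_constantCoeff, Ideal.span_le]
  rintro p (rfl | rfl | rfl) <;> simp

theorem idealOfVars_le_radical_relIdeal : idealOfVars (Fin 3) k ≤ (relIdeal k).radical := by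
  obtain ⟨hz, hyz, hy⟩ := mk_X_relations (k := k)
  refine Ideal.span_le.2 (Set.range_subset_iff.2 fun i => ?_)
  fin_cases i
  · exact ⟨4, Ideal.Quotient.eq_zero_iff_mem.1 (by simp only [map_pow]; grind)⟩
  · exact ⟨2, Ideal.Quotient.eq_zero_iff_mem.1 (by simpa using hy)⟩
  · exact ⟨2, Ideal.Quotient.eq_zero_iff_mem.1 (by simpa using hz)⟩

theorem radical_relIdeal : (relIdeal k).radical = idealOfVars (Fin 3) k :=
  le_antisymm (isMaximal_idealOfVars.isPrime.radical_le_iff.2 relIdeal_le_idealOfVars)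
    idealOfVars_le_radical_relIdeal

end Field

end GorensteinExample

open GorensteinExample

/-- For `D = k[d₁,d₂,d₃]` and `M = D/(d₃², d₂d₃ − d₁², d₂²)`: the ideal is
primary with radical `𝔪 = (d₁,d₂,d₃)`, `M` is 8-dimensional over `k` with
basis the residues of `1, d₁, d₂, d₃, d₁², d₁d₂, d₁d₃, d₁³`, and the socle
`{m | 𝔪m = 0}` is spanned by the residue of `d₁³`. -/
theorem stmt18 (k : Type*) [Field k] :
    let D := MvPolynomial (Fin 3) k
    let d1 : D := X 0
    let d2 : D := X 1
    let d3 : D := X 2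
    let a : Ideal D := Ideal.span {d3 ^ 2, d2 * d3 - d1 ^ 2, d2 ^ 2}
    let m : Ideal D := Ideal.span {d1, d2, d3}
    let π := Ideal.Quotient.mk a
    let v : Fin 8 → D ⧸ a :=
      ![π 1, π d1, π d2, π d3, π (d1 ^ 2), π (d1 * d2), π (d1 * d3), π (d1 ^ 3)]
    a.IsPrimary ∧ a.radical = m ∧
    LinearIndependent k v ∧ Submodule.span k (Set.range v) = ⊤ ∧
    {x : D ⧸ a | ∀ c ∈ m, c • x = 0} =
      ↑(Submodule.span k ({π (d1 ^ 3)} : Set (D ⧸ a))) := by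
  intro D d1 d2 d3 a m π v
  have hv : v = fun i => mono3 (π d1) (π d2) (π d3) (stdExponent i) := by
    funext i
    fin_cases i <;> simp [v, mono3, stdExponent]
  have hm : m = idealOfVars (Fin 3) k := (idealOfVars_fin_three (R := k)).symm
  refine ⟨?_, ?_, ?_, ?_, ?_⟩
  · exact Ideal.isPrimary_of_isMaximal_radical (by rw [radical_relIdeal]; exact isMaximal_idealOfVars)
  · rw [hm]; exact radical_relIdeal
  · rw [hv]; exact .of_pairing quotDualGenerator quotDualGenerator_std_mul_dual
  · rw [hv]; exact span_mono3_stdExponent_eq_top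
  · rw [hm]; exact socle_eq_span_X_zero_pow_three
end
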